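/- Let α be a real constant, β a nonzero real constant, and μ, c₂ ∈ ℝ. Then the cubic polynomial V(ζ) = (β/18)ζ³ + c₂ζ² + ((12c₂² − βμ)/(2β))ζ + 3c₂(4c₂² − βμ)/β² satisfies the travelling-wave ODE α V''''(ζ) + (V'(ζ) − μ) V''(ζ) − β V(ζ) = 0 for all ζ ∈ ℝ. Thus the travelling-wave reduction of the Ostrovsky potential equation possesses a one-parameter (c₂) family of exact cubic polynomial solutions. -/

import Mathlib

private lemma deriv_cubic (a b c d : ℝ) :
    deriv (fun z : ℝ => a * z ^ 3 + b * z ^ 2 + c * z + d)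
      = fun z : ℝ => 3 * a * z ^ 2 + 2 * b * z + c := by
  funext z
  have : HasDerivAt (fun z : ℝ => a * z ^ 3 + b * z ^ 2 + c * z + d)
      (3 * a * z ^ 2 + 2 * b * z + c) z := by
    have h := (((hasDerivAt_pow 3 z).const_mul a).add
      ((hasDerivAt_pow 2 z).const_mul b)).add
      (((hasDerivAt_id z).const_mul c).add_const d)
    convert h using 1
    · rfl
    · rfl
    · funext x; simp only [id, Pi.add_apply]; ring
    · push_cast; ring
  exact this.deriv

private lemma deriv_quad (a b c : ℝ) :
    deriv (fun z : ℝ => a * z ^ 2 + b * z + c) = fun z : ℝ => 2 * a * z + b := by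
  funext z
  have : HasDerivAt (fun z : ℝ => a * z ^ 2 + b * z + c) (2 * a * z + b) z := by
    have h := ((hasDerivAt_pow 2 z).const_mul a).add
      (((hasDerivAt_id z).const_mul b).add_const c)
    convert h using 1
    · rfl
    · rfl
    · funext x; simp only [id, Pi.add_apply]; ring
    · push_cast; ring
  exact this.deriv

private lemma deriv_lin (a b : ℝ) :
    deriv (fun z : ℝ => a * z + b) = fun _ : ℝ => a := by
  funext z
  have : HasDerivAt (fun z : ℝ => a * z + b) a z := by
    simpa using ((hasDerivAt_id z).const_mul a).add_const b
  exact this.deriv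

/-- One-parameter (`c₂`) family of exact cubic polynomial solutions of the
travelling-wave ODE `α V'''' + (V' − μ)V'' − β V = 0` of the Ostrovsky potential
equation: `V(ζ) = (β/18)ζ³ + c₂ζ² + ((12c₂² − βμ)/(2β))ζ + 3c₂(4c₂² − βμ)/β²`. -/
theorem cubic_travelling_wave_solution
    (α β μ c₂ : ℝ) (hβ : β ≠ 0) :
    ∀ ζ : ℝ,
      α * iteratedDeriv 4
          (fun z => β / 18 * z ^ 3 + c₂ * z ^ 2 + (12 * c₂ ^ 2 - β * μ) / (2 * β) * z
            + 3 * c₂ * (4 * c₂ ^ 2 - β * μ) / β ^ 2) ζ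
        + (deriv (fun z => β / 18 * z ^ 3 + c₂ * z ^ 2 + (12 * c₂ ^ 2 - β * μ) / (2 * β) * z
            + 3 * c₂ * (4 * c₂ ^ 2 - β * μ) / β ^ 2) ζ - μ)
          * iteratedDeriv 2
            (fun z => β / 18 * z ^ 3 + c₂ * z ^ 2 + (12 * c₂ ^ 2 - β * μ) / (2 * β) * z
              + 3 * c₂ * (4 * c₂ ^ 2 - β * μ) / β ^ 2) ζ
        - β * (β / 18 * ζ ^ 3 + c₂ * ζ ^ 2 + (12 * c₂ ^ 2 - β * μ) / (2 * β) * ζ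
            + 3 * c₂ * (4 * c₂ ^ 2 - β * μ) / β ^ 2)
      = 0 := by
  intro ζ
  set a := β / 18
  set b := c₂
  set c := (12 * c₂ ^ 2 - β * μ) / (2 * β)
  set d := 3 * c₂ * (4 * c₂ ^ 2 - β * μ) / β ^ 2
  have h1 : deriv (fun z : ℝ => a * z ^ 3 + b * z ^ 2 + c * z + d)
      = fun z : ℝ => 3 * a * z ^ 2 + 2 * b * z + c := deriv_cubic a b c d
  have h2 : iteratedDeriv 2 (fun z : ℝ => a * z ^ 3 + b * z ^ 2 + c * z + d)
      = fun z : ℝ => 2 * (3 * a) * z + 2 * b := by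
    rw [iteratedDeriv_succ, iteratedDeriv_one, h1, deriv_quad]
  have h4 : iteratedDeriv 4 (fun z : ℝ => a * z ^ 3 + b * z ^ 2 + c * z + d)
      = fun _ : ℝ => 0 := by
    rw [show (4 : ℕ) = 2 + 1 + 1 by rfl, iteratedDeriv_succ, iteratedDeriv_succ, h2,
      deriv_lin]
    simp
  rw [h1, h2, h4]
  have hc : c = (12 * c₂ ^ 2 - β * μ) / (2 * β) := rfl
  have hd : d = 3 * c₂ * (4 * c₂ ^ 2 - β * μ) / β ^ 2 := rfl
  simp only [a, b]
  rw [hc, hd]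
  field_simp [hc, hd]
  ring
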